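/- arXiv:2107.02042 — 3 statements merged into one kernel-verified Lean document; each statement's English description precedes it below -/
import Mathlib

section
/- Let 0 < α ≤ 1, c > 0 and let s be a nonzero real number. Then for every t > 0 the modulus of exp(c·(−i·s)^(α+1)·t) equals exp(−c·|s|^(α+1)·sin(πα/2)·t), and this quantity tends to 0 as t → +∞. -/
open Real Complex Filter

/-! Since `-(i s)` is purely imaginary, its argument is `±π/2`, so the real part of
`(-(i s))^(α+1)` is `|s|^(α+1) cos(π(α+1)/2) = -|s|^(α+1) sin(πα/2)`, which is negative
for `0 < α ≤ 1`; the modulus of the exponential therefore decays exponentially in `t`. -/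

lemma Complex.abs_arg_eq_pi_div_two_of_re_eq_zero {z : ℂ} (hre : z.re = 0) (hz : z ≠ 0) :
    |arg z| = π / 2 :=
  (abs_arg_le_pi_div_two_iff.mpr hre.ge).antisymm <| not_lt.mp fun h ↦
    (abs_arg_lt_pi_div_two_iff.mp h).elim hre.not_gt.elim hz

lemma Complex.cpow_ofReal_re_of_re_eq_zero {z : ℂ} (hre : z.re = 0) (hz : z ≠ 0) (y : ℝ) :
    (z ^ (y : ℂ)).re = ‖z‖ ^ y * Real.cos (π / 2 * y) := by
  rw [cpow_ofReal_re]
  rcases abs_eq (by positivity) |>.mp (abs_arg_eq_pi_div_two_of_re_eq_zero hre hz) with h | h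
  · rw [h]
  · rw [h, neg_mul, Real.cos_neg]

lemma Complex.norm_exp_ofReal_mul_mul_ofReal (c t : ℝ) (w : ℂ) :
    ‖exp (c * w * t)‖ = Real.exp (c * w.re * t) := by
  rw [norm_exp, re_mul_ofReal, re_ofReal_mul]

/-- Equations (eq20)–(eq21*) of the paper: for `0 < α ≤ 1`, `c > 0` and `s ≠ 0` real,
the modulus of the Fourier-side Green function `exp(c·(−i·s)^(α+1)·t)` equals
`exp(−c·|s|^(α+1)·sin(πα/2)·t)` for every `t > 0`, and it tends to `0` as `t → +∞`. -/
theorem green_function_abs_tendsto_zero (α c s : ℝ) (hα0 : 0 < α) (hα1 : α ≤ 1)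
    (hc : 0 < c) (hs : s ≠ 0) :
    (∀ t : ℝ, 0 < t →
      ‖Complex.exp ((c : ℂ) * (-(Complex.I * (s : ℂ))) ^ ((α : ℂ) + 1) * (t : ℂ))‖ =
        Real.exp (-(c * |s| ^ (α + 1) * Real.sin (Real.pi * α / 2) * t))) ∧
    Filter.Tendsto
      (fun t : ℝ =>
        ‖Complex.exp ((c : ℂ) * (-(Complex.I * (s : ℂ))) ^ ((α : ℂ) + 1) * (t : ℂ))‖)
      Filter.atTop (nhds 0) := by
  have hre : (-(I * s)).re = 0 := by simp
  have hnorm : ‖-(I * s)‖ = |s| := by simp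
  have hne : -(I * s) ≠ 0 := by simpa using hs
  have hcos : Real.cos (π / 2 * (α + 1)) = -Real.sin (π * α / 2) := by
    rw [← Real.cos_add_pi_div_two]; ring_nf
  have hmod (t : ℝ) :
      ‖exp (c * (-(I * s)) ^ ((α : ℂ) + 1) * t)‖ =
        Real.exp (-(c * |s| ^ (α + 1) * Real.sin (π * α / 2) * t)) := by
    rw [← ofReal_one, ← ofReal_add, norm_exp_ofReal_mul_mul_ofReal,
      cpow_ofReal_re_of_re_eq_zero hre hne, hnorm, hcos]
    ring_nf
  have hrate : 0 < c * |s| ^ (α + 1) * Real.sin (π * α / 2) := by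
    have := Real.sin_pos_of_pos_of_lt_pi (x := π * α / 2) (by positivity) (by nlinarith [pi_pos])
    have := abs_pos.mpr hs
    positivity
  refine ⟨fun t _ ↦ hmod t, ?_⟩
  simp only [hmod]
  exact Real.tendsto_exp_neg_atTop_nhds_zero.comp (tendsto_id.const_mul_atTop hrate)
end

section
/- Let 0 < α ≤ 1, c > 0, and let e₀ : ℝ → ℂ be Lebesgue integrable. For x ∈ [0,1] and t > 0 define e(x,t) = (1/(2π))·∫_ℝ e^{−isx}·exp(c·(−i·s)^(α+1)·t)·e₀(s) ds. Then sup_{x∈[0,1]} |e(x,t)| → 0 as t → +∞. -/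
/-!
For real `s ≠ 0` the point `-(I * s)` has argument `±π/2`, so
`Re ((-(I * s)) ^ (α + 1)) = -|s| ^ (α + 1) * sin (π α / 2) < 0` when `0 < α ≤ 1`. Hence the
multiplier `exp (c (-(I s)) ^ (α + 1) t)` has modulus `exp (-t φ s)` with
`φ s = c sin (π α / 2) |s| ^ (α + 1) > 0` off `s = 0`. The oscillating factor has modulus one, so
the supremum over `x` is bounded by `(2π)⁻¹ ∫ exp (-t φ s) ‖e₀ s‖ ds`, which tends to `0` by
dominated convergence with dominating function `‖e₀‖`.
-/

open Real Complex MeasureTheory Filter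

theorem Complex.re_neg_I_mul_ofReal_cpow (s : ℝ) {b : ℝ} (hb : b ≠ 0) :
    ((-(I * s)) ^ (b : ℂ)).re = |s| ^ b * Real.cos (π / 2 * b) := by
  rw [cpow_ofReal_re, show ‖-(I * s)‖ = |s| by simp]
  rcases lt_trichotomy s 0 with hs | rfl | hs
  · have harg : arg (-(I * s)) = π / 2 := by
      rw [show -(I * s) = ((-s : ℝ) : ℂ) * I by push_cast; ring, arg_real_mul _ (neg_pos.2 hs),
        arg_I]
    rw [harg]
  · simp [Real.zero_rpow hb]
  · have harg : arg (-(I * s)) = -(π / 2) := by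
      rw [show -(I * s) = (s : ℂ) * -I by ring, arg_real_mul _ hs, arg_neg_I]
    rw [harg, neg_mul, Real.cos_neg]

theorem Complex.norm_exp_mul_neg_I_mul_cpow (c α t s : ℝ) (hα : 0 < α) :
    ‖exp (c * (-(I * s)) ^ ((α : ℂ) + 1) * t)‖
      = Real.exp (-(t * (c * Real.sin (π * α / 2) * |s| ^ (α + 1)))) := by
  have hre := re_neg_I_mul_ofReal_cpow s (b := α + 1) (by positivity)
  have hcos : Real.cos (π / 2 * (α + 1)) = -Real.sin (π * α / 2) := by
    rw [show π / 2 * (α + 1) = π * α / 2 + π / 2 by ring, Real.cos_add_pi_div_two]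
  push_cast at hre
  rw [norm_exp, re_mul_ofReal, re_ofReal_mul, hre, hcos]
  ring_nf

theorem tendsto_integral_exp_neg_mul_mul_norm {X E : Type*} [MeasurableSpace X] {μ : Measure X}
    [NormedAddCommGroup E] {φ : X → ℝ} {f : X → E} (hφ : AEStronglyMeasurable φ μ)
    (hφ_pos : ∀ᵐ x ∂μ, 0 < φ x) (hf : Integrable f μ) :
    Tendsto (fun t : ℝ => ∫ x, Real.exp (-(t * φ x)) * ‖f x‖ ∂μ) atTop (nhds 0) := by
  have hlim : ∀ᵐ x ∂μ, Tendsto (fun t : ℝ => Real.exp (-(t * φ x)) * ‖f x‖) atTop (nhds 0) := by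
    filter_upwards [hφ_pos] with x hx
    simpa using (tendsto_exp_neg_atTop_nhds_zero.comp
      (tendsto_id.atTop_mul_const hx)).mul_const ‖f x‖
  simpa using tendsto_integral_filter_of_dominated_convergence (fun x => ‖f x‖)
    (F := fun t x => Real.exp (-(t * φ x)) * ‖f x‖)
    (Eventually.of_forall fun t =>
      (continuous_exp.comp_aestronglyMeasurable (hφ.const_mul t).neg).mul hf.norm.1)
    ((eventually_ge_atTop 0).mono fun t ht => hφ_pos.mono fun x hx => by
      rw [norm_mul, norm_norm, Real.norm_of_nonneg (Real.exp_nonneg _)]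
      exact mul_le_of_le_one_left (norm_nonneg _)
        (Real.exp_le_one_iff.2 (neg_nonpos.2 (mul_nonneg ht hx.le))))
    hf.norm hlim

theorem norm_integral_exp_neg_I_mul_mul_le (x : ℝ) (k f : ℝ → ℂ) :
    ‖∫ s : ℝ, exp (-(I * s * x)) * k s * f s‖ ≤ ∫ s : ℝ, ‖k s‖ * ‖f s‖ := by
  refine (norm_integral_le_integral_norm _).trans_eq (integral_congr_ae ?_)
  refine Eventually.of_forall fun s => ?_
  simp only [norm_mul, show -(I * s * x) = ((-(s * x) : ℝ) : ℂ) * I by push_cast; ring,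
    norm_exp_ofReal_mul_I, one_mul]

/-- The paper's Theorem 6.5: the backstepping tracking-error system is asymptotically stable
in `L∞`. If `e₀` is integrable and
`e(x,t) = (1/(2π))·∫_ℝ e^{−isx}·exp(c·(−i·s)^(α+1)·t)·e₀(s) ds`,
then `sup_{x∈[0,1]} |e(x,t)| → 0` as `t → +∞`. -/
theorem tracking_error_asymptotically_stable (α c : ℝ) (hα0 : 0 < α) (hα1 : α ≤ 1)
    (hc : 0 < c) (e0 : ℝ → ℂ) (he0 : MeasureTheory.Integrable e0) :
    Filter.Tendsto
      (fun t : ℝ => ⨆ x ∈ Set.Icc (0 : ℝ) 1,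
        ‖(1 / (2 * (Real.pi : ℂ))) *
          ∫ s : ℝ, Complex.exp (-(Complex.I * (s : ℂ) * (x : ℂ))) *
            Complex.exp ((c : ℂ) * (-(Complex.I * (s : ℂ))) ^ ((α : ℂ) + 1) * (t : ℂ)) * e0 s‖)
      Filter.atTop (nhds 0) := by
  have hsin : 0 < Real.sin (π * α / 2) :=
    Real.sin_pos_of_pos_of_lt_pi (by positivity) (by nlinarith [pi_pos])
  set φ : ℝ → ℝ := fun s => c * Real.sin (π * α / 2) * |s| ^ (α + 1)
  have hφ_pos : ∀ᵐ s : ℝ, 0 < φ s := (Measure.ae_ne volume 0).mono fun s hs =>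
    mul_pos (mul_pos hc hsin) (Real.rpow_pos_of_pos (abs_pos.2 hs) _)
  have hdecay := tendsto_integral_exp_neg_mul_mul_norm (by fun_prop) hφ_pos he0
  refine squeeze_zero (fun t => Real.iSup_nonneg fun _ => Real.iSup_nonneg fun _ => norm_nonneg _)
    (fun t => ?_) (mul_zero (1 / (2 * π)) ▸ hdecay.const_mul (1 / (2 * π)))
  have hbound : 0 ≤ 1 / (2 * π) * ∫ s, Real.exp (-(t * φ s)) * ‖e0 s‖ :=
    mul_nonneg (by positivity) (integral_nonneg fun s => by positivity)
  refine Real.iSup_le (fun x => Real.iSup_le (fun _ => ?_) hbound) hbound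
  rw [norm_mul, show ‖1 / (2 * (π : ℂ))‖ = 1 / (2 * π) by simp [abs_of_pos pi_pos]]
  gcongr
  refine (norm_integral_exp_neg_I_mul_mul_le x _ e0).trans_eq ?_
  simp only [norm_exp_mul_neg_I_mul_cpow c α t _ hα0, φ]
end

section
/- (Generalized Leibniz rule for the Caputo derivative of a parameter-dependent integral.) Let 0 < α < 1, T > 0, and let K : ℝ × ℝ → ℝ be such that K(s,τ) and its partial derivative ∂_s K(s,τ) are continuous on the triangle {(s,τ) : 0 ≤ τ ≤ s ≤ T}. Then for every t ∈ (0,T], (1/Γ(1−α))·∫₀^t (t−s)^{−α}·(d/ds ∫₀^s K(s,τ) dτ) ds = ∫₀^t [(1/Γ(1−α))·∫_τ^t (t−s)^{−α}·∂_s K(s,τ) ds] dτ + (1/Γ(1−α))·∫₀^t (t−s)^{−α}·K(s,s) ds. -/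
/-!
Writing `K(s,τ) = K(τ,τ) + ∫_τ^s ∂ₛK(r,τ) dr` and swapping the order of integration over the
triangle `0 ≤ τ ≤ r ≤ s` gives
`∫₀^s K(s,τ) dτ = ∫₀^s K(τ,τ) dτ + ∫₀^s ∫₀^r ∂ₛK(r,τ) dτ dr`, so by the fundamental theorem of
calculus the derivative of `s ↦ ∫₀^s K(s,τ) dτ` is `K(s,s) + ∫₀^s ∂ₛK(s,τ) dτ` for `0 < s < T`
(the second integrand is continuous because `∂ₛK` has a continuous Tietze extension off the
triangle). Multiplying by the integrable weight `(t - s)^(-α)` and swapping the order of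
integration once more over `0 ≤ τ ≤ s ≤ t` gives the formula.
-/

open Real intervalIntegral

open MeasureTheory Set Function

universe u v

theorem ContinuousOn.exists_continuous_eqOn {X : Type u} {Y : Type v} [TopologicalSpace X]
    [NormalSpace X] [TopologicalSpace Y] [TietzeExtension.{u, v} Y] {s : Set X} (hs : IsClosed s)
    {f : X → Y} (hf : ContinuousOn f s) : ∃ g : X → Y, Continuous g ∧ EqOn g f s := by
  obtain ⟨g, hg⟩ := ContinuousMap.exists_restrict_eq hs ⟨s.domRestrict f, hf.domRestrict⟩
  exact ⟨g, g.continuous, fun x hx => congr($hg ⟨x, hx⟩)⟩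

def triangle (T : ℝ) : Set (ℝ × ℝ) := {p | 0 ≤ p.2 ∧ p.2 ≤ p.1 ∧ p.1 ≤ T}

theorem isClosed_triangle (T : ℝ) : IsClosed (triangle T) :=
  (isClosed_le continuous_const continuous_snd).inter
    ((isClosed_le continuous_snd continuous_fst).inter
      (isClosed_le continuous_fst continuous_const))

theorem triangle_subset_Icc_prod_Icc (T : ℝ) : triangle T ⊆ Icc 0 T ×ˢ Icc 0 T :=
  fun _ ⟨h0, h1, h2⟩ => ⟨⟨h0.trans h1, h2⟩, h0, h1.trans h2⟩

theorem isCompact_triangle (T : ℝ) : IsCompact (triangle T) :=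
  (isCompact_Icc.prod isCompact_Icc).of_isClosed_subset (isClosed_triangle T)
    (triangle_subset_Icc_prod_Icc T)

theorem triangle_mono {S T : ℝ} (h : S ≤ T) : triangle S ⊆ triangle T :=
  fun _ ⟨h0, h1, h2⟩ => ⟨h0, h1, h2.trans h⟩

theorem ContinuousOn.continuousOn_integral_triangle {T : ℝ} {f : ℝ → ℝ → ℝ}
    (hf : ContinuousOn (uncurry f) (triangle T)) :
    ContinuousOn (fun s => ∫ τ in 0..s, f s τ) (Icc 0 T) := by
  obtain ⟨g, hg, hgf⟩ := hf.exists_continuous_eqOn (isClosed_triangle T)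
  refine (continuous_parametric_intervalIntegral_of_continuous (a₀ := 0) (f := curry g)
    hg continuous_id).continuousOn.congr fun s hs => integral_congr fun τ hτ => ?_
  rw [uIcc_of_le hs.1] at hτ
  exact (hgf (x := (s, τ)) ⟨hτ.1, hτ.2, hs.2⟩).symm

theorem hasDerivAt_integral_of_continuousOn {E : Type*} [NormedAddCommGroup E] [NormedSpace ℝ E]
    [CompleteSpace E] {f : ℝ → E} {a b s : ℝ}
    (hf : ContinuousOn f (Icc a b)) (hs : s ∈ Ioo a b) :
    HasDerivAt (fun u => ∫ x in a..u, f x) (f s) s :=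
  integral_hasDerivAt_right
    ((hf.mono (uIcc_subset_Icc (left_mem_Icc.2 (hs.1.le.trans hs.2.le))
      ⟨hs.1.le, hs.2.le⟩)).intervalIntegrable)
    ((hf.mono Ioo_subset_Icc_self).stronglyMeasurableAtFilter isOpen_Ioo s hs)
    (hf.continuousAt (Icc_mem_nhds hs.1 hs.2))

theorem integral_triangle_swap {g : ℝ → ℝ → ℝ} {t : ℝ} (ht : 0 ≤ t)
    (hg : IntegrableOn (uncurry g) (triangle t)) :
    ∫ s in 0..t, ∫ τ in 0..s, g s τ = ∫ τ in 0..t, ∫ s in τ..t, g s τ := by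
  set F : ℝ → ℝ → ℝ := fun s τ => (triangle t).indicator (uncurry g) (s, τ)
  have hF : Integrable (uncurry F)
      ((volume.restrict (Icc 0 t)).prod (volume.restrict (Icc 0 t))) := by
    rw [Measure.prod_restrict]
    exact ((integrable_indicator_iff (isClosed_triangle t).measurableSet).2 hg).integrableOn
  have hleft : ∀ s ∈ Icc 0 t, ∫ τ in Icc 0 t, F s τ = ∫ τ in 0..s, g s τ := by
    intro s hs
    have hslice : (fun τ => F s τ) = (Icc 0 s).indicator (g s) := by
      ext τ
      simp [F, triangle, indicator_apply, hs.2]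
    rw [hslice, setIntegral_indicator measurableSet_Icc,
      inter_eq_right.2 (Icc_subset_Icc_right hs.2),
      integral_Icc_eq_integral_Ioc, integral_of_le hs.1]
  have hright : ∀ τ ∈ Icc 0 t, ∫ s in Icc 0 t, F s τ = ∫ s in τ..t, g s τ := by
    intro τ hτ
    have hslice : (fun s => F s τ) = (Icc τ t).indicator (fun s => g s τ) := by
      ext s
      simp [F, triangle, indicator_apply, hτ.1]
    rw [hslice, setIntegral_indicator measurableSet_Icc,
      inter_eq_right.2 (Icc_subset_Icc_left hτ.1),
      integral_Icc_eq_integral_Ioc, integral_of_le hτ.2]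
  calc ∫ s in 0..t, ∫ τ in 0..s, g s τ = ∫ s in Icc 0 t, ∫ τ in Icc 0 t, F s τ := by
        rw [integral_of_le ht, ← integral_Icc_eq_integral_Ioc]
        exact (setIntegral_congr_fun measurableSet_Icc hleft).symm
    _ = ∫ τ in Icc 0 t, ∫ s in Icc 0 t, F s τ := integral_integral_swap hF
    _ = ∫ τ in 0..t, ∫ s in τ..t, g s τ := by
        rw [integral_of_le ht, ← integral_Icc_eq_integral_Ioc]
        exact setIntegral_congr_fun measurableSet_Icc hright

theorem integrableOn_triangle_comp_fst_mul {w : ℝ → ℝ} {f : ℝ × ℝ → ℝ} {t : ℝ}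
    (hw : IntegrableOn w (Icc 0 t)) (hf : ContinuousOn f (triangle t)) :
    IntegrableOn (fun p => w p.1 * f p) (triangle t) := by
  have hsq : IntegrableOn (fun p : ℝ × ℝ => w p.1) (Icc 0 t ×ˢ Icc 0 t) := by
    rw [IntegrableOn, Measure.volume_eq_prod, ← Measure.prod_restrict]
    exact hw.comp_fst _
  exact (hsq.mono_set (triangle_subset_Icc_prod_Icc t)).mul_continuousOn hf
    (isCompact_triangle t)

theorem ContinuousOn.comp_diag_triangle {f : ℝ → ℝ → ℝ} {T : ℝ}
    (hf : ContinuousOn (uncurry f) (triangle T)) : ContinuousOn (fun s => f s s) (Icc 0 T) :=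
  hf.comp (continuousOn_id.prodMk continuousOn_id) fun _ hs => ⟨hs.1, le_rfl, hs.2⟩

theorem integral_param_eq_integral_diag_add {K K' : ℝ → ℝ → ℝ} {T s : ℝ}
    (hderiv : ∀ s τ : ℝ, 0 ≤ τ → τ ≤ s → s ≤ T → HasDerivAt (fun u => K u τ) (K' s τ) s)
    (hK : ContinuousOn (uncurry K) (triangle T)) (hK' : ContinuousOn (uncurry K') (triangle T))
    (hs : s ∈ Icc 0 T) :
    ∫ τ in 0..s, K s τ = (∫ τ in 0..s, K τ τ) + ∫ r in 0..s, ∫ τ in 0..r, K' r τ := by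
  have hftc : EqOn (fun τ => K s τ - K τ τ) (fun τ => ∫ r in τ..s, K' r τ) (uIcc 0 s) := by
    intro τ hτ
    rw [uIcc_of_le hs.1] at hτ
    refine (integral_eq_sub_of_hasDerivAt (f := fun u => K u τ) (fun r hr => ?_) ?_).symm
    · rw [uIcc_of_le hτ.2] at hr
      exact hderiv r τ hτ.1 hr.1 (hr.2.trans hs.2)
    · refine (hK'.comp (continuousOn_id.prodMk continuousOn_const)
        fun r hr => ?_).intervalIntegrable
      rw [uIcc_of_le hτ.2] at hr
      exact ⟨hτ.1, hr.1, hr.2.trans hs.2⟩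
  have hKs : IntervalIntegrable (fun τ => K s τ) volume 0 s := by
    refine (hK.comp (continuousOn_const.prodMk continuousOn_id) fun τ hτ => ?_).intervalIntegrable
    rw [uIcc_of_le hs.1] at hτ
    exact ⟨hτ.1, hτ.2, hs.2⟩
  have hdiag : IntervalIntegrable (fun τ => K τ τ) volume 0 s :=
    (hK.comp_diag_triangle.mono
      (uIcc_subset_Icc (left_mem_Icc.2 (hs.1.trans hs.2)) hs)).intervalIntegrable
  rw [integral_triangle_swap hs.1
      ((hK'.mono (triangle_mono hs.2)).integrableOn_compact (isCompact_triangle s)),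
    ← integral_congr hftc, integral_sub hKs hdiag]
  ring

theorem hasDerivAt_integral_param {K K' : ℝ → ℝ → ℝ} {T s : ℝ}
    (hderiv : ∀ s τ : ℝ, 0 ≤ τ → τ ≤ s → s ≤ T → HasDerivAt (fun u => K u τ) (K' s τ) s)
    (hK : ContinuousOn (uncurry K) (triangle T)) (hK' : ContinuousOn (uncurry K') (triangle T))
    (hs : s ∈ Ioo 0 T) :
    HasDerivAt (fun s => ∫ τ in 0..s, K s τ) (K s s + ∫ τ in 0..s, K' s τ) s := by
  refine ((hasDerivAt_integral_of_continuousOn hK.comp_diag_triangle hs).add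
    (hasDerivAt_integral_of_continuousOn hK'.continuousOn_integral_triangle hs))
    |>.congr_of_eventuallyEq ?_
  filter_upwards [Icc_mem_nhds hs.1 hs.2] with s' hs'
  exact integral_param_eq_integral_diag_add hderiv hK hK' hs'

theorem integral_mul_integral_triangle_swap {w : ℝ → ℝ} {f : ℝ → ℝ → ℝ} {t : ℝ} (ht : 0 ≤ t)
    (hw : IntegrableOn w (Icc 0 t)) (hf : ContinuousOn (uncurry f) (triangle t)) :
    ∫ s in 0..t, w s * ∫ τ in 0..s, f s τ = ∫ τ in 0..t, ∫ s in τ..t, w s * f s τ := by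
  simp_rw [← intervalIntegral.integral_const_mul]
  exact integral_triangle_swap ht (integrableOn_triangle_comp_fst_mul hw hf)

theorem caputo_leibniz_rule_general (α T : ℝ) (hα1 : α < 1)
    (K K' : ℝ → ℝ → ℝ)
    (hderiv : ∀ s τ : ℝ, 0 ≤ τ → τ ≤ s → s ≤ T → HasDerivAt (fun u => K u τ) (K' s τ) s)
    (hK : ContinuousOn (fun p : ℝ × ℝ => K p.1 p.2)
      {p : ℝ × ℝ | 0 ≤ p.2 ∧ p.2 ≤ p.1 ∧ p.1 ≤ T})
    (hK' : ContinuousOn (fun p : ℝ × ℝ => K' p.1 p.2)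
      {p : ℝ × ℝ | 0 ≤ p.2 ∧ p.2 ≤ p.1 ∧ p.1 ≤ T}) :
    ∀ t ∈ Set.Ioc (0 : ℝ) T,
      (1 / Real.Gamma (1 - α)) * ∫ s in (0:ℝ)..t, (t - s) ^ (-α) *
          deriv (fun s' => ∫ τ in (0:ℝ)..s', K s' τ) s
      = (∫ τ in (0:ℝ)..t,
            (1 / Real.Gamma (1 - α)) * ∫ s in τ..t, (t - s) ^ (-α) * K' s τ)
        + (1 / Real.Gamma (1 - α)) * ∫ s in (0:ℝ)..t, (t - s) ^ (-α) * K s s := by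
  rintro t ⟨ht0, htT⟩
  have hw : IntervalIntegrable (fun s => (t - s) ^ (-α)) volume 0 t := by
    simpa using
      (intervalIntegrable_rpow' (a := t) (b := 0) (by linarith : -1 < -α)).comp_sub_left t
  have hIcc : uIcc 0 t ⊆ Icc 0 T :=
    uIcc_subset_Icc (left_mem_Icc.2 (ht0.le.trans htT)) ⟨ht0.le, htT⟩
  have hLeibniz : EqOn (fun s => (t - s) ^ (-α) * deriv (fun s' => ∫ τ in 0..s', K s' τ) s)
      (fun s => (t - s) ^ (-α) * K s s + (t - s) ^ (-α) * ∫ τ in 0..s, K' s τ) (Ioo 0 t) :=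
    fun s hs => by
      dsimp only
      rw [(hasDerivAt_integral_param hderiv hK hK' ⟨hs.1, hs.2.trans_le htT⟩).deriv, mul_add]
  rw [integral_congr_Ioo_of_le ht0.le hLeibniz,
    integral_add (hw.mul_continuousOn (hK.comp_diag_triangle.mono hIcc))
      (hw.mul_continuousOn (hK'.continuousOn_integral_triangle.mono hIcc)),
    integral_mul_integral_triangle_swap ht0.le
      ((intervalIntegrable_iff_integrableOn_Icc_of_le ht0.le).1 hw)
      (hK'.mono (triangle_mono htT)),
    intervalIntegral.integral_const_mul]
  ring

/-- The paper's Theorem 2.9 (generalized Leibniz rule for the Caputo derivative of a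
parameter-dependent integral), with all fractional operators written as explicit integrals:
for `0 < α < 1` and `K`, `∂ₛK` continuous on the triangle `{0 ≤ τ ≤ s ≤ T}`,
`^C D^α_t ∫₀^t K(t,τ)dτ = ∫₀^t (^C_τ D^α_t K)(t,τ)dτ + J^{1−α}_t K(t,t)` for `t ∈ (0,T]`. -/
theorem caputo_leibniz_rule (α T : ℝ) (hα0 : 0 < α) (hα1 : α < 1) (hT : 0 < T)
    (K K' : ℝ → ℝ → ℝ)
    (hderiv : ∀ s τ : ℝ, 0 ≤ τ → τ ≤ s → s ≤ T → HasDerivAt (fun u => K u τ) (K' s τ) s)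
    (hK : ContinuousOn (fun p : ℝ × ℝ => K p.1 p.2)
      {p : ℝ × ℝ | 0 ≤ p.2 ∧ p.2 ≤ p.1 ∧ p.1 ≤ T})
    (hK' : ContinuousOn (fun p : ℝ × ℝ => K' p.1 p.2)
      {p : ℝ × ℝ | 0 ≤ p.2 ∧ p.2 ≤ p.1 ∧ p.1 ≤ T}) :
    ∀ t ∈ Set.Ioc (0 : ℝ) T,
      (1 / Real.Gamma (1 - α)) * ∫ s in (0:ℝ)..t, (t - s) ^ (-α) *
          deriv (fun s' => ∫ τ in (0:ℝ)..s', K s' τ) s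
      = (∫ τ in (0:ℝ)..t,
            (1 / Real.Gamma (1 - α)) * ∫ s in τ..t, (t - s) ^ (-α) * K' s τ)
        + (1 / Real.Gamma (1 - α)) * ∫ s in (0:ℝ)..t, (t - s) ^ (-α) * K s s :=
  caputo_leibniz_rule_general α T hα1 K K' hderiv hK hK'
end
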